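/- arXiv:2107.10557 — 2 statements merged into one kernel-verified Lean document; each statement's English description precedes it below -/
import Mathlib

section
/- Let Q : ℝ² → ℂ be given by Q(x₁,x₂) = i(x₁³ + x₂⁴) + x₁²x₂². Then |∇Q(x)| = o(|Q(x)|^{3/2}) as |x| → ∞; more concretely, there are constants C, R > 0 such that |∇Q(x)| ≤ C |Q(x)|^{3/2} / |x| for all |x| ≥ R. -/
lemma mono12 (a b T : ℝ) (ha : 0 ≤ a) (hb : 0 ≤ b) (h3 : a^3 ≤ T) (h4 : b^4 ≤ T)
    (hT : 1 ≤ T) (p q : ℕ) (hpq : 4*p + 3*q ≤ 12) : a^p * b^q ≤ T := by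
  have hT0 : (0:ℝ) ≤ T := le_trans zero_le_one hT
  have key : (a^p * b^q)^12 ≤ T^12 := by
    have e : (a^p * b^q)^12 = (a^3)^(4*p) * (b^4)^(3*q) := by
      rw [mul_pow, ← pow_mul, ← pow_mul, ← pow_mul, ← pow_mul,
        show p*12 = 3*(4*p) by ring, show q*12 = 4*(3*q) by ring]
    rw [e]
    calc (a^3)^(4*p) * (b^4)^(3*q) ≤ T^(4*p) * T^(3*q) := by
          apply mul_le_mul (pow_le_pow_left₀ (by positivity) h3 _)
            (pow_le_pow_left₀ (by positivity) h4 _) (by positivity) (by positivity)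
      _ = T^(4*p + 3*q) := (pow_add T _ _).symm
      _ ≤ T^12 := pow_le_pow_right₀ hT hpq
  exact le_of_pow_le_pow_left₀ (by norm_num) hT0 key

lemma keypoly (a b T S : ℝ) (ha : 0 ≤ a) (hb : 0 ≤ b) (h3 : a^3 ≤ T) (h4 : b^4 ≤ T)
    (hT : 1 ≤ T) (hTS : T ≤ 2*S) :
    ((4*a*b^2 + 9*a^2 + 4*a^2*b + 16*b^3) * (a+b))^2 ≤ 38416 * S^3 := by
  have hT0 : (0:ℝ) ≤ T := le_trans zero_le_one hT
  have m1 : a * b^2 ≤ T := by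
    have := mono12 a b T ha hb h3 h4 hT 1 2 (by norm_num); simpa using this
  have m2 : a^2 ≤ T := by
    have := mono12 a b T ha hb h3 h4 hT 2 0 (by norm_num); simpa using this
  have m3 : a^2 * b ≤ T := by
    have := mono12 a b T ha hb h3 h4 hT 2 1 (by norm_num); simpa using this
  have m4 : b^3 ≤ T := by
    have := mono12 a b T ha hb h3 h4 hT 0 3 (by norm_num); simpa using this
  have m5 : b^2 ≤ T := by
    have := mono12 a b T ha hb h3 h4 hT 0 2 (by norm_num); simpa using this
  have hP : 4*a*b^2 + 9*a^2 + 4*a^2*b + 16*b^3 ≤ 33*T := by linarith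
  have hP0 : (0:ℝ) ≤ 4*a*b^2 + 9*a^2 + 4*a^2*b + 16*b^3 := by positivity
  have hsum : (a+b)^2 ≤ 4*T := by nlinarith
  have hP2 : (4*a*b^2 + 9*a^2 + 4*a^2*b + 16*b^3)^2 ≤ 1089*T^2 := by nlinarith
  have hmul : (4*a*b^2 + 9*a^2 + 4*a^2*b + 16*b^3)^2 * (a+b)^2 ≤ 1089*T^2 * (4*T) := by
    apply mul_le_mul hP2 hsum (sq_nonneg _) (by positivity)
  have hS : (0:ℝ) ≤ S := by linarith
  have hT3 : T^3 ≤ 8*S^3 := by nlinarith [pow_le_pow_left₀ hT0 hTS 3]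
  nlinarith [hmul, hT3]

set_option maxHeartbeats 1000000 in
/-- For `Q(x₁,x₂) = i(x₁³ + x₂⁴) + x₁²x₂²` one has `|∇Q(x)| = o(|Q(x)|^{3/2})` as `|x| → ∞`;
concretely there are `C, R > 0` with `|∇Q(x)| ≤ C |Q(x)|^{3/2}/|x|` for `|x| ≥ R`. -/
theorem stmt3 :
    ∃ C > (0:ℝ), ∃ R > (0:ℝ), ∀ x₁ x₂ : ℝ, R ≤ Real.sqrt (x₁ ^ 2 + x₂ ^ 2) →
      Real.sqrt
        ((norm (2 * (x₁:ℂ) * (x₂:ℂ) ^ 2 + 3 * Complex.I * (x₁:ℂ) ^ 2)) ^ 2 +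
          (norm (2 * (x₁:ℂ) ^ 2 * (x₂:ℂ) + 4 * Complex.I * (x₂:ℂ) ^ 3)) ^ 2) ≤
      C * (norm (Complex.I * ((x₁:ℂ) ^ 3 + (x₂:ℂ) ^ 4) + (x₁:ℂ) ^ 2 * (x₂:ℂ) ^ 2))
          ^ ((3:ℝ)/2) / Real.sqrt (x₁ ^ 2 + x₂ ^ 2) := by
  refine ⟨14, by norm_num, 10, by norm_num, fun x₁ x₂ hR => ?_⟩
  -- notation
  set S : ℝ := (x₁^2*x₂^2)^2 + (x₁^3+x₂^4)^2 with hSdef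
  have hS0 : (0:ℝ) ≤ S := by positivity
  -- abs computations
  have e1 : (2 * (x₁:ℂ) * (x₂:ℂ) ^ 2 + 3 * Complex.I * (x₁:ℂ) ^ 2)
      = ((2*x₁*x₂^2 : ℝ) : ℂ) + ((3*x₁^2 : ℝ) : ℂ) * Complex.I := by push_cast; ring
  have h1 : (norm (2 * (x₁:ℂ) * (x₂:ℂ) ^ 2 + 3 * Complex.I * (x₁:ℂ) ^ 2))^2
      = (2*x₁*x₂^2)^2 + (3*x₁^2)^2 := by
    rw [e1, Complex.norm_add_mul_I, Real.sq_sqrt (by positivity)]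
  have e2 : (2 * (x₁:ℂ) ^ 2 * (x₂:ℂ) + 4 * Complex.I * (x₂:ℂ) ^ 3)
      = ((2*x₁^2*x₂ : ℝ) : ℂ) + ((4*x₂^3 : ℝ) : ℂ) * Complex.I := by push_cast; ring
  have h2 : (norm (2 * (x₁:ℂ) ^ 2 * (x₂:ℂ) + 4 * Complex.I * (x₂:ℂ) ^ 3))^2
      = (2*x₁^2*x₂)^2 + (4*x₂^3)^2 := by
    rw [e2, Complex.norm_add_mul_I, Real.sq_sqrt (by positivity)]
  have eQ : (Complex.I * ((x₁:ℂ) ^ 3 + (x₂:ℂ) ^ 4) + (x₁:ℂ) ^ 2 * (x₂:ℂ) ^ 2)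
      = ((x₁^2*x₂^2 : ℝ) : ℂ) + ((x₁^3+x₂^4 : ℝ) : ℂ) * Complex.I := by push_cast; ring
  have hQ : norm (Complex.I * ((x₁:ℂ) ^ 3 + (x₂:ℂ) ^ 4) + (x₁:ℂ) ^ 2 * (x₂:ℂ) ^ 2)
      = Real.sqrt S := by
    rw [eQ, Complex.norm_add_mul_I]
  rw [h1, h2, hQ]
  -- basic size facts
  have hN : (100:ℝ) ≤ x₁^2 + x₂^2 := by
    nlinarith [Real.sq_sqrt (show (0:ℝ) ≤ x₁^2 + x₂^2 by positivity), hR,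
      Real.sqrt_nonneg (x₁^2 + x₂^2)]
  have hT1 : (1:ℝ) ≤ x₁^6 + x₂^8 := by
    rcases le_total (x₁^2) 50 with h' | h'
    · have hb : (50:ℝ) ≤ x₂^2 := by linarith
      nlinarith [pow_le_pow_left₀ (by norm_num : (0:ℝ) ≤ 50) hb 4, pow_nonneg (sq_nonneg x₁) 3]
    · nlinarith [pow_le_pow_left₀ (by norm_num : (0:ℝ) ≤ 50) h' 3, pow_nonneg (sq_nonneg x₂) 4]
  have h4 : (0:ℝ) ≤ x₂^4 := by positivity
  have e6 : (0:ℝ) ≤ x₁^6 := by positivity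
  have e8 : (0:ℝ) ≤ x₂^8 := by positivity
  have t2 : (0:ℝ) ≤ x₁^4*x₂^4 := by positivity
  have hTS : x₁^6 + x₂^8 ≤ 2*S := by
    have G : (0:ℝ) ≤ x₁^6 + x₂^8 + 4*(x₁^3*x₂^4) + 2*(x₁^4*x₂^4) := by
      rcases le_total 0 x₁ with hx | hx
      · have t1 := mul_nonneg (pow_nonneg hx 3) h4
        linarith
      · rcases le_total x₁ (-2) with h2' | h2'
        · have k1 : x₁^3 ≤ 0 := Odd.pow_nonpos ⟨1, rfl⟩ hx
          have hf : (0:ℝ) ≤ x₁^3*(4+2*x₁) := by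
            have e : (-x₁^3)*(-(4+2*x₁)) = x₁^3*(4+2*x₁) := by ring
            rw [← e]
            exact mul_nonneg (by linarith) (by linarith)
          have h0' : (0:ℝ) ≤ 4*(x₁^3*x₂^4) + 2*(x₁^4*x₂^4) := by
            rw [show 4*(x₁^3*x₂^4) + 2*(x₁^4*x₂^4) = (x₁^3*(4+2*x₁))*x₂^4 by ring]
            exact mul_nonneg hf h4
          linarith
        · have hx14 : x₁^2 ≤ 4 := by nlinarith
          have hb2 : (96:ℝ) ≤ x₂^2 := by linarith
          have hb4 : (9216:ℝ) ≤ x₂^4 := by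
            rw [show x₂^4 = x₂^2*x₂^2 by ring]
            calc (9216:ℝ) = 96*96 := by norm_num
              _ ≤ x₂^2*x₂^2 := mul_le_mul hb2 hb2 (by norm_num) (sq_nonneg x₂)
          have hquad : (0:ℝ) ≤ x₁^2 - 2*x₁ + 4 := by nlinarith [sq_nonneg (x₁-1)]
          have hx3 : (-8:ℝ) ≤ x₁^3 := by
            have h := mul_nonneg (by linarith : (0:ℝ) ≤ x₁ + 2) hquad
            have e : (x₁+2)*(x₁^2-2*x₁+4) = x₁^3 + 8 := by ring
            rw [e] at h; linarith
          have k : (-8)*x₂^4 ≤ x₁^3*x₂^4 := mul_le_mul_of_nonneg_right hx3 h4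
          have k2 : (0:ℝ) ≤ x₂^8 - 32*x₂^4 := by
            rw [show x₂^8 - 32*x₂^4 = (x₂^4-32)*x₂^4 by ring]
            exact mul_nonneg (by linarith) h4
          linarith
    rw [hSdef,
      show ((x₁^2*x₂^2)^2 + (x₁^3+x₂^4)^2 : ℝ)
        = x₁^4*x₂^4 + (x₁^6 + 2*(x₁^3*x₂^4) + x₂^8) by ring]
    linarith
  -- polynomial inequality
  have hkey := keypoly (x₁^2) (x₂^2) (x₁^6 + x₂^8) S (sq_nonneg x₁) (sq_nonneg x₂)
    (by nlinarith [pow_nonneg (sq_nonneg x₂) 4]) (by nlinarith [pow_nonneg (sq_nonneg x₁) 3])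
    hT1 hTS
  set P : ℝ := (2*x₁*x₂^2)^2 + (3*x₁^2)^2 + ((2*x₁^2*x₂)^2 + (4*x₂^3)^2) with hPdef
  have hPeq : P = 4*(x₁^2)*(x₂^2)^2 + 9*(x₁^2)^2 + 4*(x₁^2)^2*(x₂^2) + 16*(x₂^2)^3 := by
    rw [hPdef]; ring
  have hP0 : (0:ℝ) ≤ P := by rw [hPdef]; positivity
  have hkey' : (P * (x₁^2 + x₂^2))^2 ≤ 38416 * S^3 := by rw [hPeq]; exact hkey
  -- deduce P * (x₁²+x₂²) ≤ 196 * S * sqrt S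
  have hstep : P * (x₁^2 + x₂^2) ≤ 196 * (S * Real.sqrt S) := by
    have hrhs : (196 * (S * Real.sqrt S))^2 = 38416 * S^3 := by
      rw [mul_pow, mul_pow, Real.sq_sqrt hS0]; ring
    have := hkey'.trans_eq hrhs.symm
    exact le_of_pow_le_pow_left₀ (by norm_num) (by positivity) this
  -- assemble with square roots
  have hn : (0:ℝ) < Real.sqrt (x₁^2 + x₂^2) := Real.sqrt_pos.mpr (by nlinarith)
  rw [le_div_iff₀ hn]
  have hSpos : (0:ℝ) < S := by nlinarith
  have hs : (0:ℝ) < Real.sqrt S := Real.sqrt_pos.mpr hSpos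
  have hrpow : (Real.sqrt S) ^ ((3:ℝ)/2) = Real.sqrt S * Real.sqrt (Real.sqrt S) := by
    rw [show (3:ℝ)/2 = 1 + 1/2 by norm_num, Real.rpow_add hs, Real.rpow_one,
      ← Real.sqrt_eq_rpow]
  rw [hrpow]
  calc Real.sqrt P * Real.sqrt (x₁^2 + x₂^2)
      = Real.sqrt (P * (x₁^2 + x₂^2)) := (Real.sqrt_mul hP0 _).symm
    _ ≤ Real.sqrt (196 * (S * Real.sqrt S)) := Real.sqrt_le_sqrt hstep
    _ = 14 * (Real.sqrt S * Real.sqrt (Real.sqrt S)) := by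
        rw [Real.sqrt_mul (by norm_num : (0:ℝ) ≤ 196),
          Real.sqrt_mul hS0,
          show (196:ℝ) = 14^2 by norm_num, Real.sqrt_sq (by norm_num : (0:ℝ) ≤ 14)]
    _ = 14 * Real.sqrt S * Real.sqrt (Real.sqrt S) := by ring
    _ = 14 * (Real.sqrt S * Real.sqrt (Real.sqrt S)) := by ring
end

section
/- Let U ∈ C¹((x₀,∞);ℝ) with U' > 0 satisfy |U''(x)| ≤ C U'(x)x^ν on (x₀,∞) with ν ≥ −1, and let Υ(x) = x^ν / U'(x)^{1/3}. Suppose Υ(x) → 0 as x → +∞ and U'(x) ≤ C U(x) x^ν. Then U'(x)/U(x)^{3/2} → 0 as x → +∞; more precisely U'(x)/U(x)^{3/2} ≤ C' Υ(x)^{3/2} for large x. -/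
open Filter

/-- If `U' > 0`, `|U''| ≤ C U' x^ν`, `U' ≤ C U x^ν` and `Υ(x) = x^ν U'(x)^{−1/3} → 0`,
then `U'/U^{3/2} → 0`; more precisely `U'/U^{3/2} ≤ C' Υ^{3/2}` for large `x`. -/
theorem stmt6 (U : ℝ → ℝ) (x₀ C ν : ℝ) (hx₀ : 0 < x₀) (hC : 0 < C) (hν : -1 ≤ ν)
    (hU : ContDiffOn ℝ 2 U (Set.Ioi x₀))
    (hU' : ∀ x > x₀, 0 < deriv U x)
    (hU'' : ∀ x > x₀, |deriv (deriv U) x| ≤ C * deriv U x * x ^ ν)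
    (hUbd : ∀ x > x₀, deriv U x ≤ C * U x * x ^ ν)
    (hΥ : Tendsto (fun x : ℝ => x ^ ν / (deriv U x) ^ ((1:ℝ)/3)) atTop (nhds 0)) :
    (∃ C' > (0:ℝ), ∃ x₁ : ℝ, ∀ x > x₁,
        deriv U x / (U x) ^ ((3:ℝ)/2) ≤
          C' * (x ^ ν / (deriv U x) ^ ((1:ℝ)/3)) ^ ((3:ℝ)/2)) ∧
    Tendsto (fun x : ℝ => deriv U x / (U x) ^ ((3:ℝ)/2)) atTop (nhds 0) := by
  have hpos : ∀ x > x₀, 0 < U x := by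
    intro x hx
    have hx0 : 0 < x := hx₀.trans hx
    have h1 := hU' x hx
    have h2 := hUbd x hx
    nlinarith [Real.rpow_pos_of_pos hx0 ν, mul_pos hC (Real.rpow_pos_of_pos hx0 ν)]
  have hmain : ∀ x > x₀,
      deriv U x / (U x) ^ ((3:ℝ)/2) ≤
        C ^ ((3:ℝ)/2) * (x ^ ν / (deriv U x) ^ ((1:ℝ)/3)) ^ ((3:ℝ)/2) := by
    intro x hx
    have hx0 : 0 < x := hx₀.trans hx
    have hU'p := hU' x hx
    have hUp := hpos x hx
    have hxν : (0:ℝ) < x ^ ν := Real.rpow_pos_of_pos hx0 ν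
    have key : (deriv U x) ^ ((3:ℝ)/2) ≤ (C * U x * x ^ ν) ^ ((3:ℝ)/2) :=
      Real.rpow_le_rpow hU'p.le (hUbd x hx) (by norm_num)
    have hrw : (C * U x * x ^ ν) ^ ((3:ℝ)/2)
        = C ^ ((3:ℝ)/2) * (U x) ^ ((3:ℝ)/2) * (x ^ ν) ^ ((3:ℝ)/2) := by
      rw [Real.mul_rpow (by positivity) (by positivity), Real.mul_rpow hC.le hUp.le]
    have hΥrw : (x ^ ν / (deriv U x) ^ ((1:ℝ)/3)) ^ ((3:ℝ)/2)
        = (x ^ ν) ^ ((3:ℝ)/2) / (deriv U x) ^ ((1:ℝ)/2) := by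
      rw [Real.div_rpow hxν.le (by positivity), ← Real.rpow_mul hU'p.le]
      norm_num
    have e1 : deriv U x * (deriv U x) ^ ((1:ℝ)/2) = (deriv U x) ^ ((3:ℝ)/2) := by
      nth_rewrite 1 [← Real.rpow_one (deriv U x)]
      rw [← Real.rpow_add hU'p]; norm_num
    rw [hΥrw, mul_div_assoc', div_le_div_iff₀ (by positivity) (by positivity), e1]
    rw [hrw] at key
    nlinarith [key, Real.rpow_pos_of_pos hUp ((3:ℝ)/2), Real.rpow_pos_of_pos hxν ((3:ℝ)/2)]
  refine ⟨⟨C ^ ((3:ℝ)/2), Real.rpow_pos_of_pos hC _, x₀, hmain⟩, ?_⟩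
  have h1 : Tendsto (fun x : ℝ =>
      C ^ ((3:ℝ)/2) * (x ^ ν / (deriv U x) ^ ((1:ℝ)/3)) ^ ((3:ℝ)/2)) atTop (nhds 0) := by
    have h0 := hΥ.rpow_const (p := (3:ℝ)/2) (Or.inr (by norm_num))
    have h2 := h0.const_mul (C ^ ((3:ℝ)/2))
    simpa [Real.zero_rpow] using h2
  apply tendsto_of_tendsto_of_tendsto_of_le_of_le' tendsto_const_nhds h1
  · filter_upwards [eventually_gt_atTop x₀] with x hx
    exact div_nonneg (hU' x hx).le (Real.rpow_nonneg (hpos x hx).le _)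
  · filter_upwards [eventually_gt_atTop x₀] with x hx
    exact hmain x hx
end
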